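/- arXiv:1509.02279 — 2 statements merged into one kernel-verified Lean document; each statement's English description precedes it below -/
import Mathlib

section
/- Let 1 < p < 2 and 0 < q < 1/p. Define on Θ = {(x,t): |x| < (-t)^q, -1 < t < 0} the function u(x,t) = |x|^{p/(p-1)}/(-t)^{pq/(p-1)} - (n/(1-pq)) (p/(p-1))^{p-1} (-t)^{1-pq}. Then u satisfies ∂_t u - Δ_p u ≥ 0 pointwise in Θ ∩ {x ≠ 0}; more precisely ∂_t u(x,t) ≥ n (-t)^{-pq} (p/(p-1))^{p-1} = Δ_p u(x,t). -/
/-!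
For `x ≠ 0` the spatial profile is `c ‖x‖^α + d` with `c = (-t)^(-pq/(p-1)) > 0` and
`α = p/(p-1)` the conjugate exponent of `p`. Since `(α - 1)(p - 1) = 1`, its gradient
`c α ‖x‖^(α-2) x` has `p`-flux `‖∇u‖^(p-2) ∇u = (c α)^(p-1) x`, a multiple of the identity,
so `Δ_p u = n (c α)^(p-1) = n (-t)^(-pq) α^(p-1)`. In time, the first term of `u` is
nondecreasing on `t < 0`, and the second one contributes exactly the same amount
`n (-t)^(-pq) α^(p-1)` to `∂_t u`: this is how its constant `n/(1-pq) α^(p-1)` is chosen.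
-/

open Real Filter Set

/-- The p-Laplacian `div(|∇u|^{p-2} ∇u)` computed via Fréchet derivatives. -/
noncomputable def pLap (p : ℝ) {n : ℕ} (u : EuclideanSpace ℝ (Fin n) → ℝ)
    (x : EuclideanSpace ℝ (Fin n)) : ℝ :=
  ∑ i, (inner ℝ (fderiv ℝ (fun y => ‖gradient u y‖ ^ (p - 2) • gradient u y) x
      (EuclideanSpace.single i 1)) (EuclideanSpace.single i (1 : ℝ)) : ℝ)

open Topology

section Flux

variable {F : Type*} [NormedAddCommGroup F] [InnerProductSpace ℝ F]

noncomputable def pFlux (p : ℝ) (v : F) : F := ‖v‖ ^ (p - 2) • v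

lemma pFlux_smul_norm_rpow_smul {p α A : ℝ} (hA : 0 < A) (hpα : (α - 1) * (p - 1) = 1)
    {y : F} (hy : y ≠ 0) : pFlux p ((A * ‖y‖ ^ (α - 2)) • y) = A ^ (p - 1) • y := by
  have hy0 : 0 < ‖y‖ := norm_pos_iff.mpr hy
  have hnorm : ‖(A * ‖y‖ ^ (α - 2)) • y‖ = A * ‖y‖ ^ (α - 1) := by
    rw [norm_smul, Real.norm_of_nonneg (by positivity), mul_assoc,
      ← Real.rpow_add_one hy0.ne']
    ring_nf
  rw [pFlux, hnorm, smul_smul]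
  congr 1
  calc (A * ‖y‖ ^ (α - 1)) ^ (p - 2) * (A * ‖y‖ ^ (α - 2))
      = A ^ (p - 2 + 1) * ‖y‖ ^ ((α - 1) * (p - 2) + (α - 2)) := by
        rw [Real.mul_rpow hA.le (by positivity), ← Real.rpow_mul hy0.le,
          Real.rpow_add hy0, Real.rpow_add_one hA.ne']
        ring
    _ = A ^ (p - 1) := by
        rw [show (α - 1) * (p - 2) + (α - 2) = (α - 1) * (p - 1) - 1 by ring, hpα,
          show p - 2 + 1 = p - 1 by ring]
        norm_num

variable [CompleteSpace F]

lemma hasGradientAt_const_mul_norm_rpow_add (c d : ℝ) {α : ℝ} (hα : 1 < α) (y : F) :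
    HasGradientAt (fun z : F => c * ‖z‖ ^ α + d) ((c * α * ‖y‖ ^ (α - 2)) • y) y := by
  rw [hasGradientAt_iff_hasFDerivAt]
  refine (((hasFDerivAt_norm_rpow y hα).const_mul c).add_const d).congr_fderiv ?_
  ext z
  simp
  ring

end Flux

section PLaplacian

variable {n : ℕ} {p : ℝ}

lemma pLap_eq_of_pFlux_eventuallyEq_smul {C : ℝ} {u : EuclideanSpace ℝ (Fin n) → ℝ}
    {x : EuclideanSpace ℝ (Fin n)} (h : (fun y => pFlux p (gradient u y)) =ᶠ[𝓝 x] (C • ·)) :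
    pLap p u x = n * C := by
  simp only [pFlux] at h
  rw [pLap, h.fderiv_eq, fderiv_fun_const_smul differentiableAt_fun_id, fderiv_fun_id]
  simp [real_inner_smul_left]

theorem pLap_const_mul_norm_rpow_add {c α : ℝ} (d : ℝ) (hp : 1 < p) (hc : 0 < c)
    (hpα : (α - 1) * (p - 1) = 1) {x : EuclideanSpace ℝ (Fin n)} (hx : x ≠ 0) :
    pLap p (fun y => c * ‖y‖ ^ α + d) x = n * (c * α) ^ (p - 1) := by
  have hα : 1 < α := by nlinarith
  apply pLap_eq_of_pFlux_eventuallyEq_smul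
  filter_upwards [isOpen_compl_singleton.mem_nhds hx] with y hy
  rw [(hasGradientAt_const_mul_norm_rpow_add c d hα y).gradient]
  exact pFlux_smul_norm_rpow_smul (by positivity) hpα hy

end PLaplacian

section NegRpow

variable {t : ℝ}

lemma hasDerivAt_neg_rpow (β : ℝ) (ht : t < 0) :
    HasDerivAt (fun s => (-s) ^ β) (-(β * (-t) ^ (β - 1))) t := by
  simpa using (hasDerivAt_neg t).rpow_const (p := β) (Or.inl (neg_ne_zero.2 ht.ne))

lemma hasDerivAt_const_div_neg_rpow (a β : ℝ) (ht : t < 0) :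
    HasDerivAt (fun s => a / (-s) ^ β) (a * β * (-t) ^ (-β - 1)) t := by
  have h := (hasDerivAt_neg_rpow (-β) ht).const_mul a
  refine (h.congr_of_eventuallyEq ?_).congr_deriv (by ring)
  filter_upwards [eventually_lt_nhds ht] with s hs
  rw [Real.rpow_neg (by linarith), div_eq_mul_inv]

lemma le_deriv_const_div_neg_rpow_sub {a β : ℝ} (K γ : ℝ) (ha : 0 ≤ a) (hβ : 0 ≤ β)
    (ht : t < 0) : K * γ * (-t) ^ (γ - 1) ≤ deriv (fun s => a / (-s) ^ β - K * (-s) ^ γ) t := by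
  rw [((hasDerivAt_const_div_neg_rpow a β ht).fun_sub ((hasDerivAt_neg_rpow γ ht).const_mul K)).deriv]
  have : 0 ≤ a * β * (-t) ^ (-β - 1) := by
    have := Real.rpow_nonneg (neg_nonneg.2 ht.le) (-β - 1)
    positivity
  linarith

end NegRpow

theorem irregularity_barrier_singular_general (p q : ℝ) (hp1 : 1 < p)
    (hq0 : 0 < q) (hq : q < 1 / p) (n : ℕ)
    (Θ : Set (EuclideanSpace ℝ (Fin n) × ℝ))
    (hΘ : Θ = {z : EuclideanSpace ℝ (Fin n) × ℝ |
      ‖z.1‖ < (-z.2) ^ q ∧ -1 < z.2 ∧ z.2 < 0})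
    (u : EuclideanSpace ℝ (Fin n) → ℝ → ℝ)
    (hu : ∀ x t, u x t = ‖x‖ ^ (p / (p - 1)) / (-t) ^ (p * q / (p - 1)) -
      n / (1 - p * q) * (p / (p - 1)) ^ (p - 1) * (-t) ^ (1 - p * q))
    (x : EuclideanSpace ℝ (Fin n)) (t : ℝ) (hmem : (x, t) ∈ Θ) (hx : x ≠ 0) :
    pLap p (fun y => u y t) x = n * (-t) ^ (-(p * q)) * (p / (p - 1)) ^ (p - 1) ∧
    deriv (u x) t ≥ n * (-t) ^ (-(p * q)) * (p / (p - 1)) ^ (p - 1) ∧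
    deriv (u x) t - pLap p (fun y => u y t) x ≥ 0 := by
  subst hΘ
  have ht : 0 < -t := by linarith [hmem.2.2]
  have hpq : p * q < 1 := by rwa [lt_div_iff₀ (by linarith), mul_comm] at hq
  have hp1' : 0 < p - 1 := by linarith
  set α := p / (p - 1)
  set β := p * q / (p - 1)
  set K := n / (1 - p * q) * α ^ (p - 1)
  have hαp : (α - 1) * (p - 1) = 1 := by simp only [α]; field_simp; ring
  have hlap : pLap p (fun y => u y t) x = n * (-t) ^ (-(p * q)) * α ^ (p - 1) := by
    have hspace : (fun y => u y t) =
        fun y => (-t) ^ (-β) * ‖y‖ ^ α + -(K * (-t) ^ (1 - p * q)) := by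
      funext y
      rw [hu, Real.rpow_neg ht.le]
      ring
    rw [hspace, pLap_const_mul_norm_rpow_add _ hp1 (Real.rpow_pos_of_pos ht _) hαp hx,
      Real.mul_rpow (Real.rpow_nonneg ht.le _) (by positivity), ← Real.rpow_mul ht.le,
      show -β * (p - 1) = -(p * q) by simp only [β]; field_simp]
    ring
  have hderiv : n * (-t) ^ (-(p * q)) * α ^ (p - 1) ≤ deriv (u x) t := by
    have hK : K * (1 - p * q) = n * α ^ (p - 1) := by
      simp only [K]; field_simp [(by linarith : 1 - p * q ≠ 0)]
    rw [funext (hu x)]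
    refine (le_deriv_const_div_neg_rpow_sub (a := ‖x‖ ^ α) K (1 - p * q) (by positivity)
      (by positivity) (neg_pos.1 ht)).trans_eq' ?_
    rw [hK, show 1 - p * q - 1 = -(p * q) by ring]
    ring
  exact ⟨hlap, hderiv, by linarith⟩

/-- The irregularity barrier for `1 < p < 2`, `0 < q < 1/p`:
`u(x,t) = |x|^{p/(p-1)}/(-t)^{pq/(p-1)} - (n/(1-pq))(p/(p-1))^{p-1}(-t)^{1-pq}`
satisfies `∂_t u ≥ n(-t)^{-pq}(p/(p-1))^{p-1} = Δ_p u`, hence `∂_t u - Δ_p u ≥ 0`, in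
`Θ ∩ {x ≠ 0}`. -/
theorem irregularity_barrier_singular (p q : ℝ) (hp1 : 1 < p) (hp2 : p < 2)
    (hq0 : 0 < q) (hq : q < 1 / p) (n : ℕ) (hn : 1 ≤ n)
    (Θ : Set (EuclideanSpace ℝ (Fin n) × ℝ))
    (hΘ : Θ = {z : EuclideanSpace ℝ (Fin n) × ℝ |
      ‖z.1‖ < (-z.2) ^ q ∧ -1 < z.2 ∧ z.2 < 0})
    (u : EuclideanSpace ℝ (Fin n) → ℝ → ℝ)
    (hu : ∀ x t, u x t = ‖x‖ ^ (p / (p - 1)) / (-t) ^ (p * q / (p - 1)) -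
      n / (1 - p * q) * (p / (p - 1)) ^ (p - 1) * (-t) ^ (1 - p * q))
    (x : EuclideanSpace ℝ (Fin n)) (t : ℝ) (hmem : (x, t) ∈ Θ) (hx : x ≠ 0) :
    pLap p (fun y => u y t) x = n * (-t) ^ (-(p * q)) * (p / (p - 1)) ^ (p - 1) ∧
    deriv (u x) t ≥ n * (-t) ^ (-(p * q)) * (p / (p - 1)) ^ (p - 1) ∧
    deriv (u x) t - pLap p (fun y => u y t) x ≥ 0 :=
  irregularity_barrier_singular_general p q hp1 hq0 hq n Θ hΘ u hu x t hmem hx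
end

section
/- Let p > 2, λ = n(p-2)+p, f(t) < 0 smooth, C ∈ ℝ, Q as above, and w(x,t) = (Q(x,t)^{(p-1)/(p-2)} - C^{(p-1)/(p-2)}) f(t) + ρ(t). Then the spatial p-Laplacian satisfies Δ_p w = (Q^{(p-1)/(p-2)} |f|^{p-2} f / λ) · n/(-t)^{p/λ} + (Q^{1/(p-2)} |f|^{p-2} f / λ^{p/(p-1)}) (|x|/(-t)^{1/λ})^{p/(p-1)} (-t)^{-p/λ}; in particular, since f < 0 and Q ≥ C > 0, Δ_p w ≤ (n/λ) Q^{(p-1)/(p-2)} (-t)^{-p/λ} |f|^{p-2} f. -/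
open Real Filter Set


lemma sq_rpow_aux {r : ℝ} (hr : 0 ≤ r) (e : ℝ) : ((r ^ 2 : ℝ)) ^ e = r ^ (2 * e) := by
  rw [show ((r : ℝ) ^ 2) = r ^ ((2 : ℕ) : ℝ) from (Real.rpow_natCast r 2).symm,
    ← Real.rpow_mul hr]
  norm_num

lemma hasGradientAt_radial {m : ℕ} (F : ℝ → ℝ) (F' : ℝ) (y : EuclideanSpace ℝ (Fin m))
    (hF : HasDerivAt F F' (‖y‖ ^ 2)) :
    HasGradientAt (fun z : EuclideanSpace ℝ (Fin m) => F (‖z‖ ^ 2)) ((2 * F') • y) y := by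
  have h0 : HasFDerivAt (fun z : EuclideanSpace ℝ (Fin m) => ‖z‖ ^ 2)
      ((2 : ℕ) • (innerSL ℝ y)) y := by
    simpa using (hasFDerivAt_id y).norm_sq
  have h1 := hF.comp_hasFDerivAt y h0
  rw [hasGradientAt_iff_hasFDerivAt]
  convert h1 using 1
  · rfl
  · rfl
  · refine ContinuousLinearMap.ext fun v => ?_
    simp [InnerProductSpace.toDual_apply_apply, real_inner_smul_left]
    ring

lemma key_scalar (p q ft A Gr r : ℝ) (hp : 2 < p) (hq : (q - 2) * (p - 1) + (p - 2) = 0)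
    (hft : ft < 0) (hA : 0 < A) (hG : 0 < Gr) (hr : 0 < r) :
    ((-(ft * A * Gr ^ (1 / (p - 2)) * r ^ (q - 2))) * r) ^ (p - 2) *
      (ft * A * Gr ^ (1 / (p - 2)) * r ^ (q - 2))
      = |ft| ^ (p - 2) * ft * A ^ (p - 1) * Gr ^ ((p - 1) / (p - 2)) := by
  have hp2 : (0:ℝ) < p - 2 := by linarith
  have hb : (0:ℝ) < -ft := by linarith
  have hGr : (0:ℝ) ≤ Gr ^ (1 / (p - 2)) := Real.rpow_nonneg hG.le _
  have hrq : (0:ℝ) ≤ r ^ (q - 2) := Real.rpow_nonneg hr.le _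
  have e0 : (-(ft * A * Gr ^ (1 / (p - 2)) * r ^ (q - 2))) * r
      = (-ft) * A * Gr ^ (1 / (p - 2)) * r ^ (q - 2) * r := by ring
  rw [e0]
  rw [Real.mul_rpow (by positivity) hr.le, Real.mul_rpow (by positivity) hrq,
    Real.mul_rpow (by positivity) hGr, Real.mul_rpow hb.le hA.le]
  rw [← Real.rpow_mul hG.le, ← Real.rpow_mul hr.le]
  rw [abs_of_neg hft]
  have hA2 : A ^ (p - 2) * A = A ^ (p - 1) := by
    rw [← Real.rpow_add_one hA.ne' (p - 2)]; ring_nf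
  have hG2 : Gr ^ (1 / (p - 2) * (p - 2)) = Gr := by
    rw [one_div, inv_mul_cancel₀ hp2.ne', Real.rpow_one]
  have hG3 : Gr * Gr ^ (1 / (p - 2)) = Gr ^ ((p - 1) / (p - 2)) := by
    nth_rewrite 1 [← Real.rpow_one Gr]
    rw [← Real.rpow_add hG]
    congr 1
    field_simp
    ring
  have hr3 : r ^ ((q - 2) * (p - 2)) * r ^ (p - 2) * r ^ (q - 2) = 1 := by
    rw [← Real.rpow_add hr, ← Real.rpow_add hr,
      show (q - 2) * (p - 2) + (p - 2) + (q - 2) = (q - 2) * (p - 1) + (p - 2) by ring, hq,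
      Real.rpow_zero]
  rw [hG2]
  calc (-ft) ^ (p - 2) * A ^ (p - 2) * Gr * r ^ ((q - 2) * (p - 2)) * r ^ (p - 2) *
        (ft * A * Gr ^ (1 / (p - 2)) * r ^ (q - 2))
      = (-ft) ^ (p - 2) * ft * (A ^ (p - 2) * A) * (Gr * Gr ^ (1 / (p - 2))) *
        (r ^ ((q - 2) * (p - 2)) * r ^ (p - 2) * r ^ (q - 2)) := by ring
    _ = _ := by rw [hA2, hG3, hr3]; ring

set_option maxHeartbeats 2000000 in
/-- For `w(x,t) = (Q^{(p-1)/(p-2)} - C^{(p-1)/(p-2)}) f(t) + ρ(t)` with `f < 0` smooth,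
the spatial p-Laplacian equals
`(Q^{(p-1)/(p-2)}|f|^{p-2}f/λ) n(-t)^{-p/λ} + (Q^{1/(p-2)}|f|^{p-2}f/λ^{p/(p-1)})(|x|(-t)^{-1/λ})^{p/(p-1)}(-t)^{-p/λ}`;
in particular `Δ_p w ≤ (n/λ) Q^{(p-1)/(p-2)} (-t)^{-p/λ} |f|^{p-2} f`. -/
theorem pLap_of_w (p : ℝ) (hp : 2 < p) (n : ℕ) (hn : 1 ≤ n) (lam C : ℝ)
    (hlam : lam = n * (p - 2) + p) (hC : 0 < C)
    (Q : EuclideanSpace ℝ (Fin n) → ℝ → ℝ)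
    (hQ : ∀ x t, Q x t = C + (p - 2) / (p * lam ^ (1 / (p - 1))) *
      (‖x‖ / (-t) ^ (1 / lam)) ^ (p / (p - 1)))
    (f ρ : ℝ → ℝ) (hf : ContDiff ℝ (⊤ : ℕ∞) f) (hρ : ContDiff ℝ (⊤ : ℕ∞) ρ)
    (hfneg : ∀ t, f t < 0)
    (w : EuclideanSpace ℝ (Fin n) → ℝ → ℝ)
    (hw : ∀ x t, w x t =
      (Q x t ^ ((p - 1) / (p - 2)) - C ^ ((p - 1) / (p - 2))) * f t + ρ t)
    (x : EuclideanSpace ℝ (Fin n)) (t : ℝ) (hx : x ≠ 0) (ht : t < 0) :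
    pLap p (fun y => w y t) x =
      Q x t ^ ((p - 1) / (p - 2)) * |f t| ^ (p - 2) * f t / lam *
        (n / (-t) ^ (p / lam)) +
      Q x t ^ (1 / (p - 2)) * |f t| ^ (p - 2) * f t / lam ^ (p / (p - 1)) *
        (‖x‖ / (-t) ^ (1 / lam)) ^ (p / (p - 1)) / (-t) ^ (p / lam) ∧
    pLap p (fun y => w y t) x ≤
      n / lam * Q x t ^ ((p - 1) / (p - 2)) / (-t) ^ (p / lam) *
        (|f t| ^ (p - 2) * f t) := by
  have hp2 : (0:ℝ) < p - 2 := by linarith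
  have hp1 : (0:ℝ) < p - 1 := by linarith
  have hp0 : (0:ℝ) < p := by linarith
  have hto : (0:ℝ) < -t := by linarith
  have hlampos : 0 < lam := by
    rw [hlam]
    have h0 : (0:ℝ) ≤ (n:ℝ) := Nat.cast_nonneg n
    nlinarith
  set q : ℝ := p / (p - 1) with hqdef
  set al : ℝ := (p - 1) / (p - 2) with hal
  have hq0 : (q - 2) * (p - 1) + (p - 2) = 0 := by
    rw [hqdef]; field_simp; ring
  set T : ℝ := (-t) ^ (1 / lam) with hTdef
  have hTpos : 0 < T := Real.rpow_pos_of_pos hto _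
  set L : ℝ := lam ^ (1 / (p - 1)) with hLdef
  have hLpos : 0 < L := Real.rpow_pos_of_pos hlampos _
  set K : ℝ := (p - 2) / (p * L) with hKdef
  have hKpos : 0 < K := div_pos hp2 (by positivity)
  have hTq : 0 < T ^ q := Real.rpow_pos_of_pos hTpos _
  set K₂ : ℝ := K / T ^ q with hK2def
  have hK2pos : 0 < K₂ := div_pos hKpos hTq
  set A : ℝ := al * K₂ * q with hAdef
  have halpos : 0 < al := div_pos hp1 hp2
  have hqpos : 0 < q := div_pos hp0 hp1
  have hApos : 0 < A := by positivity
  have hQy : ∀ y : EuclideanSpace ℝ (Fin n), Q y t = C + K₂ * ‖y‖ ^ q := by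
    intro y
    rw [hQ y t, ← hTdef, Real.div_rpow (norm_nonneg y) hTpos.le, hK2def]
    ring
  set F : ℝ → ℝ := fun s => ((C + K₂ * s ^ (q / 2)) ^ al - C ^ al) * f t + ρ t with hFdef
  have hsq : ∀ r : ℝ, 0 ≤ r → ((r ^ 2 : ℝ)) ^ (q / 2) = r ^ q := by
    intro r hr; rw [sq_rpow_aux hr]; congr 1; ring
  have hsq' : ∀ r : ℝ, 0 ≤ r → ((r ^ 2 : ℝ)) ^ (q / 2 - 1) = r ^ (q - 2) := by
    intro r hr; rw [sq_rpow_aux hr]; congr 1; ring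
  have huF : (fun y => w y t) = fun z : EuclideanSpace ℝ (Fin n) => F (‖z‖ ^ 2) := by
    funext z
    rw [hw z t, hQy z]
    simp only [hFdef]
    rw [hsq _ (norm_nonneg z)]
  rw [huF]
  set cc : ℝ := |f t| ^ (p - 2) * f t * A ^ (p - 1) with hccdef
  set hh : ℝ → ℝ := fun s => cc * (C + K₂ * s ^ (q / 2)) ^ al with hhdef
  have hGpos : ∀ r : ℝ, 0 ≤ r → 0 < C + K₂ * r ^ q := by
    intro r hr
    have : 0 ≤ K₂ * r ^ q := mul_nonneg hK2pos.le (Real.rpow_nonneg hr _)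
    linarith
  have hals : al - 1 = 1 / (p - 2) := by
    rw [hal, div_sub_one hp2.ne']
    congr 1
    ring
  have hVW : ∀ y : EuclideanSpace ℝ (Fin n), y ≠ 0 →
      ‖gradient (fun z : EuclideanSpace ℝ (Fin n) => F (‖z‖ ^ 2)) y‖ ^ (p - 2) •
        gradient (fun z : EuclideanSpace ℝ (Fin n) => F (‖z‖ ^ 2)) y = hh (‖y‖ ^ 2) • y := by
    intro y hy
    have hr : 0 < ‖y‖ := norm_pos_iff.mpr hy
    have hs : (0:ℝ) < ‖y‖ ^ 2 := by positivity
    have hbase : 0 < C + K₂ * ((‖y‖:ℝ) ^ 2) ^ (q / 2) := by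
      rw [hsq _ hr.le]; exact hGpos _ hr.le
    have d1 : HasDerivAt (fun s : ℝ => s ^ (q / 2))
        (q / 2 * ((‖y‖:ℝ) ^ 2) ^ (q / 2 - 1)) (‖y‖ ^ 2) :=
      Real.hasDerivAt_rpow_const (Or.inl hs.ne')
    have d2 := (d1.const_mul K₂).const_add C
    have d3 := d2.rpow_const (p := al) (Or.inl hbase.ne')
    have d4 : HasDerivAt F
        (K₂ * (q / 2 * ((‖y‖:ℝ) ^ 2) ^ (q / 2 - 1)) * al *
          (C + K₂ * ((‖y‖:ℝ) ^ 2) ^ (q / 2)) ^ (al - 1) * f t) (‖y‖ ^ 2) := by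
      rw [hFdef]
      exact ((d3.sub_const _).mul_const _).add_const _
    have hgrad := (hasGradientAt_radial F _ y d4).gradient
    have hGy := hGpos ‖y‖ hr.le
    have ha : 2 * (K₂ * (q / 2 * ((‖y‖:ℝ) ^ 2) ^ (q / 2 - 1)) * al *
          (C + K₂ * ((‖y‖:ℝ) ^ 2) ^ (q / 2)) ^ (al - 1) * f t)
        = f t * A * (C + K₂ * ‖y‖ ^ q) ^ (1 / (p - 2)) * ‖y‖ ^ (q - 2) := by
      rw [hsq _ hr.le, hsq' _ hr.le, hals, hAdef]; ring
    rw [hgrad, ha]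
    have haneg : f t * A * (C + K₂ * ‖y‖ ^ q) ^ (1 / (p - 2)) * ‖y‖ ^ (q - 2) < 0 := by
      have h1 : 0 < A * (C + K₂ * ‖y‖ ^ q) ^ (1 / (p - 2)) * ‖y‖ ^ (q - 2) :=
        mul_pos (mul_pos hApos (Real.rpow_pos_of_pos hGy _)) (Real.rpow_pos_of_pos hr _)
      rw [show f t * A * (C + K₂ * ‖y‖ ^ q) ^ (1 / (p - 2)) * ‖y‖ ^ (q - 2)
          = f t * (A * (C + K₂ * ‖y‖ ^ q) ^ (1 / (p - 2)) * ‖y‖ ^ (q - 2)) by ring]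
      exact mul_neg_of_neg_of_pos (hfneg t) h1
    rw [norm_smul, Real.norm_eq_abs, abs_of_neg haneg, smul_smul]
    simp only [hhdef]
    rw [hsq _ hr.le]
    congr 1
    have hks := key_scalar p q (f t) A (C + K₂ * ‖y‖ ^ q) ‖y‖ hp hq0 (hfneg t) hApos hGy hr
    rw [hks, hccdef, hal]
  have hnsq : HasFDerivAt (fun z : EuclideanSpace ℝ (Fin n) => ‖z‖ ^ 2)
      ((2 : ℝ) • innerSL ℝ x) x := by
    have h2 : ((2 : ℕ) • innerSL ℝ x) = ((2 : ℝ) • innerSL ℝ x) := by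
      ext v; simp [two_smul]
    rw [← h2]
    simpa using (hasFDerivAt_id x).norm_sq
  have hrx : 0 < ‖x‖ := norm_pos_iff.mpr hx
  have hsx : (0:ℝ) < ‖x‖ ^ 2 := by positivity
  have hbx : 0 < C + K₂ * ((‖x‖:ℝ) ^ 2) ^ (q / 2) := by
    rw [hsq _ hrx.le]; exact hGpos _ hrx.le
  have d1x : HasDerivAt (fun s : ℝ => s ^ (q / 2))
      (q / 2 * ((‖x‖:ℝ) ^ 2) ^ (q / 2 - 1)) (‖x‖ ^ 2) :=
    Real.hasDerivAt_rpow_const (Or.inl hsx.ne')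
  have d2x := (d1x.const_mul K₂).const_add C
  have d3x := d2x.rpow_const (p := al) (Or.inl hbx.ne')
  set h₁ : ℝ := cc * (K₂ * (q / 2 * ((‖x‖:ℝ) ^ 2) ^ (q / 2 - 1)) * al *
      (C + K₂ * ((‖x‖:ℝ) ^ 2) ^ (q / 2)) ^ (al - 1)) with hh1def
  have dh : HasDerivAt hh h₁ (‖x‖ ^ 2) := by
    rw [hhdef, hh1def]
    exact HasDerivAt.const_mul cc d3x
  have hc := dh.comp_hasFDerivAt x hnsq
  have hW : HasFDerivAt (fun z : EuclideanSpace ℝ (Fin n) => hh (‖z‖ ^ 2) • z)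
      (hh (‖x‖ ^ 2) • ContinuousLinearMap.id ℝ (EuclideanSpace ℝ (Fin n)) +
        (h₁ • ((2 : ℝ) • innerSL ℝ x)).smulRight x) x :=
    hc.smul (hasFDerivAt_id x)
  have hev : (fun z : EuclideanSpace ℝ (Fin n) =>
      ‖gradient (fun z' : EuclideanSpace ℝ (Fin n) => F (‖z'‖ ^ 2)) z‖ ^ (p - 2) •
        gradient (fun z' : EuclideanSpace ℝ (Fin n) => F (‖z'‖ ^ 2)) z)
      =ᶠ[nhds x] fun z => hh (‖z‖ ^ 2) • z := by
    filter_upwards [eventually_ne_nhds hx] with z hz using hVW z hz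
  have hfd : fderiv ℝ (fun z : EuclideanSpace ℝ (Fin n) =>
      ‖gradient (fun z' : EuclideanSpace ℝ (Fin n) => F (‖z'‖ ^ 2)) z‖ ^ (p - 2) •
        gradient (fun z' : EuclideanSpace ℝ (Fin n) => F (‖z'‖ ^ 2)) z) x
      = hh (‖x‖ ^ 2) • ContinuousLinearMap.id ℝ (EuclideanSpace ℝ (Fin n)) +
        (h₁ • ((2 : ℝ) • innerSL ℝ x)).smulRight x := by
    rw [hev.fderiv_eq, hW.fderiv]
  have hxx : ∑ i, x i * x i = ‖x‖ ^ 2 := by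
    rw [← real_inner_self_eq_norm_sq]
    simp only [PiLp.inner_apply, RCLike.inner_apply, conj_trivial]
  have hterm : ∀ i : Fin n,
      (inner ℝ ((hh (‖x‖ ^ 2) • ContinuousLinearMap.id ℝ (EuclideanSpace ℝ (Fin n)) +
        (h₁ • ((2 : ℝ) • innerSL ℝ x)).smulRight x) (EuclideanSpace.single i 1))
        (EuclideanSpace.single i (1:ℝ)) : ℝ)
      = hh (‖x‖ ^ 2) + 2 * h₁ * (x i * x i) := by
    intro i
    simp [ContinuousLinearMap.smulRight_apply, inner_add_left, real_inner_smul_left,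
      EuclideanSpace.inner_single_left, EuclideanSpace.inner_single_right,
      EuclideanSpace.single_apply]
    ring
  have hsum : pLap p (fun z : EuclideanSpace ℝ (Fin n) => F (‖z‖ ^ 2)) x
      = n * hh (‖x‖ ^ 2) + 2 * h₁ * ‖x‖ ^ 2 := by
    simp only [pLap]
    rw [hfd]
    rw [Finset.sum_congr rfl (fun i _ => hterm i), Finset.sum_add_distrib,
      Finset.sum_const, Finset.card_univ, Fintype.card_fin, ← Finset.mul_sum, hxx,
      nsmul_eq_mul]
  rw [hsum]
  have hhx : hh (‖x‖ ^ 2) = cc * (C + K₂ * ‖x‖ ^ q) ^ al := by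
    simp only [hhdef]; rw [hsq _ hrx.le]
  have hnx2 : (‖x‖:ℝ) ^ (q - 2) * ‖x‖ ^ 2 = ‖x‖ ^ q := by
    rw [show ((‖x‖:ℝ) ^ 2) = ‖x‖ ^ ((2:ℕ):ℝ) from (Real.rpow_natCast _ 2).symm,
      ← Real.rpow_add hrx]
    congr 1; norm_num
  have hterm2 : 2 * h₁ * ‖x‖ ^ 2 = cc * A * (C + K₂ * ‖x‖ ^ q) ^ (1 / (p - 2)) * ‖x‖ ^ q := by
    rw [hh1def, hsq _ hrx.le, hsq' _ hrx.le, hals, hAdef]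
    linear_combination (cc * ((p - 1) / (p - 2)) * K₂ * q *
      (C + K₂ * ‖x‖ ^ q) ^ (1 / (p - 2))) * hnx2
  have hp0' : p ≠ 0 := hp0.ne'
  have hp1' : p - 1 ≠ 0 := hp1.ne'
  have hp2' : p - 2 ≠ 0 := hp2.ne'
  have hL' : L ≠ 0 := hLpos.ne'
  have hTq' : T ^ q ≠ 0 := hTq.ne'
  have hlam' : lam ≠ 0 := hlampos.ne'
  have hAval : A = (L * T ^ q)⁻¹ := by
    rw [hAdef, hK2def, hKdef, hal, hqdef]
    field_simp
  have hLp : L ^ (p - 1) = lam := by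
    rw [hLdef, ← Real.rpow_mul hlampos.le, one_div, inv_mul_cancel₀ hp1', Real.rpow_one]
  have hTqp : (T ^ q) ^ (p - 1) = (-t) ^ (p / lam) := by
    rw [hTdef, ← Real.rpow_mul hto.le, ← Real.rpow_mul hto.le]
    congr 1
    rw [hqdef]
    field_simp
  have hE : 0 < (-t) ^ (p / lam) := Real.rpow_pos_of_pos hto _
  have hE' : (-t) ^ (p / lam) ≠ 0 := hE.ne'
  have hApow : A ^ (p - 1) = (lam * (-t) ^ (p / lam))⁻¹ := by
    rw [hAval, Real.inv_rpow (by positivity), Real.mul_rpow hLpos.le hTq.le, hLp, hTqp]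
  have hlamq : lam ^ q = lam * L := by
    rw [hqdef, hLdef, show p / (p - 1) = 1 + 1 / (p - 1) by field_simp; ring,
      Real.rpow_add hlampos, Real.rpow_one]
  have hdivq : ((‖x‖:ℝ) / T) ^ q = ‖x‖ ^ q / T ^ q := Real.div_rpow (norm_nonneg x) hTpos.le q
  have hQxpos := hGpos ‖x‖ hrx.le
  constructor
  · rw [hhx, hterm2, hQy x, hccdef, hApow, hAval, hlamq, hdivq]
    field_simp
  · have h2le : 2 * h₁ * ‖x‖ ^ 2 ≤ 0 := by
      rw [hterm2]
      have h1 : 0 ≤ A * (C + K₂ * ‖x‖ ^ q) ^ (1 / (p - 2)) * ‖x‖ ^ q :=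
        mul_nonneg (mul_nonneg hApos.le (Real.rpow_nonneg hQxpos.le _))
          (Real.rpow_nonneg (norm_nonneg x) _)
      have hccle : cc < 0 := by
        rw [hccdef]
        have hfa : 0 < |f t| := abs_pos.mpr (hfneg t).ne
        have h2 : 0 < |f t| ^ (p - 2) * A ^ (p - 1) :=
          mul_pos (Real.rpow_pos_of_pos hfa _) (Real.rpow_pos_of_pos hApos _)
        rw [show |f t| ^ (p - 2) * f t * A ^ (p - 1)
            = f t * (|f t| ^ (p - 2) * A ^ (p - 1)) by ring]
        exact mul_neg_of_neg_of_pos (hfneg t) h2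
      rw [show cc * A * (C + K₂ * ‖x‖ ^ q) ^ (1 / (p - 2)) * ‖x‖ ^ q
          = cc * (A * (C + K₂ * ‖x‖ ^ q) ^ (1 / (p - 2)) * ‖x‖ ^ q) by ring]
      exact mul_nonpos_iff.mpr (Or.inr ⟨hccle.le, h1⟩)
    have h1eq : (n:ℝ) * hh (‖x‖ ^ 2)
        = n / lam * Q x t ^ al / (-t) ^ (p / lam) * (|f t| ^ (p - 2) * f t) := by
      rw [hhx, hQy x, hccdef, hApow]
      field_simp
    linarith [h2le, h1eq]
end
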